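/- (Energy identity for invariant measures of the GHGF semi-flow.) Let H : ℝ^n × ℝ^n → ℝ be a Tonelli Hamiltonian, ℤ^n-periodic in the x variable, and let φ : ℝ^n → ℝ be ℤ^n-periodic, Lipschitz and semiconcave. Let S⁺ ⊂ C([0,∞), ℝ^n) be the set of strict singular characteristics γ : [0,∞) → ℝ^n for (φ,H), endow C([0,∞), ℝ^n) with the topology of uniform convergence on compact sets, and let P^t be the shift P^t(γ)(s) = γ(t+s). Let μ be a Borel probability measure on C([0,∞), ℝ^n) concentrated on S⁺ and invariant: (P^t)_# μ = μ for all t ≥ 0. Then ∫ H(γ(0), p♯(γ(0))) dμ(γ) = − ∫ L(γ(0), H_p(γ(0), p♯(γ(0)))) dμ(γ). Moreover, if ψ : ℝ^n → ℝ is ℤ^n-periodic and Lipschitz and satisfies ψ(y) − ψ(x) ≤ A_t(x,y) + c·t for all x, y ∈ ℝ^n and all t > 0, then ∫ H(γ(0), p♯(γ(0))) dμ(γ) ≤ c. -/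

import Mathlib

open MeasureTheory Set Filter Topology intervalIntegral
open scoped RealInnerProductSpace NNReal ENNReal

noncomputable section

abbrev E (n : ℕ) := EuclideanSpace ℝ (Fin n)

variable {n : ℕ}

/-- `φ` is semiconcave with linear modulus and constant `C`. -/
def Semiconcave (C : ℝ) (φ : E n → ℝ) : Prop :=
  ConcaveOn ℝ Set.univ (fun x => φ x - C / 2 * ‖x‖ ^ 2)

/-- The superdifferential of `φ` at `x`. -/
def superdiff (φ : E n → ℝ) (x : E n) : Set (E n) :=
  {p | ∀ ε > 0, ∀ᶠ y in 𝓝 x, φ y - φ x - ⟪p, y - x⟫ ≤ ε * ‖y - x‖}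

/-- Tonelli Hamiltonian. -/
structure IsTonelli (H : E n → E n → ℝ) : Prop where
  smooth : ContDiff ℝ 2 (fun q : E n × E n => H q.1 q.2)
  posdef : ∀ x p v : E n, v ≠ 0 → 0 < iteratedFDeriv ℝ 2 (H x) p ![v, v]
  superlinear : ∀ A : ℝ, 0 ≤ A → ∃ B : ℝ, ∀ x p, A * ‖p‖ - B ≤ H x p

/-- The Tonelli Lagrangian associated to `H` via the Fenchel transform. -/
def Lag (H : E n → E n → ℝ) (x v : E n) : ℝ := ⨆ p : E n, (⟪p, v⟫ - H x p)

/-- Partial gradient of `H` in the momentum variable. -/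
def Hp (H : E n → E n → ℝ) (x p : E n) : E n := gradient (H x) p

/-- The integer vector `k` viewed as an element of `E n`. -/
def intVec (k : Fin n → ℤ) : E n :=
  (WithLp.equiv 2 (Fin n → ℝ)).symm (fun i => (k i : ℝ))

/-- `f` is `ℤⁿ`-periodic. -/
def ZPeriodic {α : Type*} (f : E n → α) : Prop :=
  ∀ (x : E n) (k : Fin n → ℤ), f (x + intVec k) = f x

/-- The fundamental solution `A_t(x,y)`: the infimum of the action over absolutely
continuous curves joining `x` to `y` in time `t`. -/
def fundSol (L : E n → E n → ℝ) (t : ℝ) (x y : E n) : ℝ :=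
  sInf {r : ℝ | ∃ ξ ξ' : ℝ → E n, ξ 0 = x ∧ ξ t = y ∧
    IntervalIntegrable ξ' MeasureTheory.volume 0 t ∧
    (∀ s ∈ Set.Icc 0 t, ξ s = x + ∫ u in (0:ℝ)..s, ξ' u) ∧
    r = ∫ s in (0:ℝ)..t, L (ξ s) (ξ' s)}

/-- The negative Lax–Oleinik operator `T⁻_t` (with `T⁻_0 = id`). -/
def Tminus (L : E n → E n → ℝ) (t : ℝ) (φ : E n → ℝ) (x : E n) : ℝ :=
  if t ≤ 0 then φ x else ⨅ y : E n, (φ y + fundSol L t y x)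

/-- The positive Lax–Oleinik operator `T⁺_t` (with `T⁺_0 = id`). -/
def Tplus (L : E n → E n → ℝ) (t : ℝ) (φ : E n → ℝ) (x : E n) : ℝ :=
  if t ≤ 0 then φ x else ⨆ y : E n, (φ y - fundSol L t x y)

/-- `φ` is a weak KAM solution with critical value `c`. -/
def WeakKAM (L : E n → E n → ℝ) (c : ℝ) (φ : E n → ℝ) : Prop :=
  ∀ t ≥ (0:ℝ), ∀ x, Tminus L t φ x = φ x - c * t

/-- The absolutely continuous curve `γ`, with a.e. derivative `γ'`, is
`(φ,c)`-calibrated on `[a,b]`. -/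
def IsCalibratedOn (L : E n → E n → ℝ) (c : ℝ) (φ : E n → ℝ) (a b : ℝ)
    (γ γ' : ℝ → E n) : Prop :=
  IntervalIntegrable γ' MeasureTheory.volume a b ∧
  (∀ s ∈ Set.Icc a b, γ s = γ a + ∫ u in a..s, γ' u) ∧
  ∀ s₁ ∈ Set.Icc a b, ∀ s₂ ∈ Set.Icc a b, s₁ ≤ s₂ →
    φ (γ s₂) - φ (γ s₁) = (∫ s in s₁..s₂, L (γ s) (γ' s)) + c * (s₂ - s₁)

/-- The cut time `τ_φ(x)` of `φ` at `x` (valued in `ℝ≥0∞`). -/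
def cutTime (L : E n → E n → ℝ) (c : ℝ) (φ : E n → ℝ) (x : E n) : ℝ≥0∞ :=
  ⨆ t ∈ {t : ℝ | 0 ≤ t ∧ ∃ γ γ' : ℝ → E n, γ 0 = x ∧ IsCalibratedOn L c φ 0 t γ γ'},
    ENNReal.ofReal t

/-- The cut locus of `φ`. -/
def cutLocus (L : E n → E n → ℝ) (c : ℝ) (φ : E n → ℝ) : Set (E n) :=
  {x | cutTime L c φ x = 0}

/-- `ps` is the minimal energy selection of `D⁺φ` for the pair `(φ, H)`. -/
def MinSel (φ : E n → ℝ) (H : E n → E n → ℝ) (ps : E n → E n) : Prop :=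
  ∀ x, ps x ∈ superdiff φ x ∧ ∀ q ∈ superdiff φ x, H x (ps x) ≤ H x q

/-- Borel σ-algebra on the path space `C([0,∞), ℝⁿ)` (compact-open topology). -/
instance pathSpaceMeasurable : MeasurableSpace C(ℝ≥0, E n) := borel _

/-- The shift map `P^t(γ)(s) = γ(t+s)` on the path space. -/
def shiftMap (t : ℝ≥0) (γ : C(ℝ≥0, E n)) : C(ℝ≥0, E n) :=
  γ.comp ⟨fun s => t + s, by fun_prop⟩

/-- A path `γ : [0,∞) → ℝⁿ`, extended to `ℝ` by `γ(t ∨ 0)`. -/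
def ext (γ : C(ℝ≥0, E n)) : ℝ → E n := fun t => γ (Real.toNNReal t)

/-- `γ` is a strict singular characteristic for `(φ, H)` on `[0,∞)`. -/
def IsSSC (H : E n → E n → ℝ) (ps : E n → E n) (γ : C(ℝ≥0, E n)) : Prop :=
  (∃ K : ℝ≥0, LipschitzOnWith K (ext γ) (Set.Ici 0)) ∧
  ∀ᵐ t ∂(MeasureTheory.volume.restrict (Set.Ici (0:ℝ))),
    HasDerivWithinAt (ext γ) (Hp H (ext γ t) (ps (ext γ t))) (Set.Ici 0) t

/-!
Along a strict singular characteristic `γ`, wherever `φ ∘ γ` is differentiable its derivative is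
`⟪p, γ'⟫` for every `p ∈ D⁺φ(γ)`, so `φ(γ 1) - φ(γ 0) = ∫₀¹ ⟪p♯, H_p(γ, p♯)⟫`. Invariance of `μ`
under the shifts and Fubini turn `∫ dμ ∫₀¹ f(γ t) dt` into `∫ f(γ 0) dμ`, while the increment of
the bounded function `φ` integrates to `0`; hence `∫ ⟪p♯, H_p(γ 0, p♯)⟫ dμ = 0`. The Fenchel
identity `L(x, H_p(x, p)) = ⟪p, H_p(x, p)⟫ - H(x, p)` then gives the energy identity. For the bound,
`ψ(γ 1) - ψ(γ 0) ≤ A_1(γ 0, γ 1) + c ≤ ∫₀¹ L(γ, γ') + c`, and integrating against `μ` gives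
`0 ≤ -∫ H(γ 0, p♯) dμ + c`.
-/

section FTC

variable {F : Type*} [NormedAddCommGroup F] [NormedSpace ℝ F] {f G : ℝ → F} {K : ℝ≥0} {a b : ℝ}

lemma LipschitzOnWith.ae_norm_le_of_ae_hasDerivAt (hf : LipschitzOnWith K f (uIcc a b))
    (hder : ∀ᵐ t, t ∈ uIcc a b → HasDerivAt f (G t) t) :
    ∀ᵐ t, t ∈ uIcc a b → ‖G t‖ ≤ K := by
  have hne (c : ℝ) : ∀ᵐ t : ℝ, t ≠ c := by simp [ae_iff, measure_singleton]
  filter_upwards [hder, hne a, hne b] with t ht hta htb htab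
  refine (ht htab).le_of_lipschitzOn (Icc_mem_nhds ?_ ?_) hf
  · exact lt_of_le_of_ne htab.1 (by rcases min_choice a b with h | h <;> rw [h] <;> grind)
  · exact lt_of_le_of_ne htab.2 (by rcases max_choice a b with h | h <;> rw [h] <;> grind)

lemma LipschitzOnWith.intervalIntegrable_of_ae_hasDerivAt (hf : LipschitzOnWith K f (uIcc a b))
    (hG : AEStronglyMeasurable G volume) (hder : ∀ᵐ t, t ∈ uIcc a b → HasDerivAt f (G t) t) :
    IntervalIntegrable G volume a b := by
  rw [intervalIntegrable_iff]
  refine Measure.integrableOn_of_bounded measure_Ioc_lt_top.ne hG (M := K) ?_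
  rw [ae_restrict_iff' measurableSet_uIoc]
  filter_upwards [hf.ae_norm_le_of_ae_hasDerivAt hder] with t ht htab
  exact ht (uIoc_subset_uIcc htab)

theorem LipschitzOnWith.integral_eq_sub_of_ae_hasDerivAt [CompleteSpace F]
    (hf : LipschitzOnWith K f (uIcc a b)) (hG : AEStronglyMeasurable G volume)
    (hder : ∀ᵐ t, t ∈ uIcc a b → HasDerivAt f (G t) t) :
    ∫ t in a..b, G t = f b - f a := by
  have hGi := hf.intervalIntegrable_of_ae_hasDerivAt hG hder
  have hGK := hf.ae_norm_le_of_ae_hasDerivAt hder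
  set I : ℝ → F := fun x => ∫ t in a..x, G t
  have hI : LipschitzOnWith K I (uIcc a b) := by
    refine LipschitzOnWith.of_dist_le_mul fun x hx y hy => ?_
    rw [dist_eq_norm, intervalIntegral.integral_interval_sub_left
      (hGi.mono_set (uIcc_subset_uIcc left_mem_uIcc hx))
      (hGi.mono_set (uIcc_subset_uIcc left_mem_uIcc hy)),
      Real.dist_eq]
    refine intervalIntegral.norm_integral_le_of_norm_le_const_ae ?_
    filter_upwards [hGK] with t ht hyx
    exact ht (uIcc_subset_uIcc hy hx (uIoc_subset_uIcc hyx))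
  obtain ⟨C, hC⟩ := (hf.absolutelyContinuousOnInterval.sub
    hI.absolutelyContinuousOnInterval).const_of_ae_hasDerivAt_zero (by
      filter_upwards [hder, hGi.ae_hasDerivAt_integral] with t ht hIt htab
      simpa using (ht htab).sub (hIt htab a left_mem_uIcc))
  have := (hC a left_mem_uIcc).trans (hC b right_mem_uIcc).symm
  simp only [Pi.sub_apply, I, intervalIntegral.integral_same, sub_zero] at this
  rw [this]; abel

end FTC

section Superdiff

lemma norm_le_of_mem_superdiff {φ : E n → ℝ} {κ : ℝ≥0} (hφ : LipschitzWith κ φ) {x p : E n}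
    (hp : p ∈ superdiff φ x) : ‖p‖ ≤ κ := by
  -- compare the superdifferential inequality at `x - s • p` with the Lipschitz bound
  refine le_of_forall_pos_le_add fun ε hε => ?_
  have hlim : Tendsto (fun s : ℝ => x - s • p) (𝓝[>] 0) (𝓝 x) :=
    ((by fun_prop : Continuous fun s : ℝ => x - s • p).tendsto' 0 x (by simp)).mono_left
      nhdsWithin_le_nhds
  obtain ⟨s, hs, hs0⟩ := ((hlim.eventually (hp ε hε)).and self_mem_nhdsWithin).exists
  have hs0 : 0 < s := hs0
  have hLip : φ x - φ (x - s • p) ≤ κ * (s * ‖p‖) := by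
    have := hφ.dist_le_mul x (x - s • p)
    rw [Real.dist_eq, dist_eq_norm, sub_sub_cancel, norm_smul, Real.norm_of_nonneg hs0.le] at this
    exact (le_abs_self _).trans this
  rw [sub_sub_cancel_left, inner_neg_right, real_inner_smul_right, real_inner_self_eq_norm_sq,
    norm_neg, norm_smul, Real.norm_of_nonneg hs0.le] at hs
  have : s * ‖p‖ * ‖p‖ ≤ s * ‖p‖ * (κ + ε) := by nlinarith
  rcases (norm_nonneg p).eq_or_lt with h | h
  · rw [← h]; positivity
  · exact le_of_mul_le_mul_left this (by positivity)

lemma eq_zero_of_forall_eventually_mul_sub_le {c t : ℝ}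
    (h : ∀ ε > 0, ∀ᶠ s in 𝓝 t, c * (s - t) ≤ ε * |s - t|) : c = 0 := by
  by_contra hc
  obtain ⟨δ, hδ, hball⟩ := Metric.eventually_nhds_iff.1 (h (|c| / 2) (by positivity))
  have hδ2 : |δ / 2| = δ / 2 := abs_of_pos (half_pos hδ)
  have hright : c * (δ / 2) ≤ |c| / 2 * (δ / 2) := by
    have := hball (y := t + δ / 2) (by rw [Real.dist_eq, add_sub_cancel_left, hδ2]; linarith)
    rwa [add_sub_cancel_left, hδ2] at this
  have hleft : -c * (δ / 2) ≤ |c| / 2 * (δ / 2) := by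
    have := hball (y := t - δ / 2)
      (by rw [Real.dist_eq, sub_sub_cancel_left, abs_neg, hδ2]; linarith)
    rwa [sub_sub_cancel_left, abs_neg, hδ2, mul_neg, ← neg_mul] at this
  have hpos : 0 < |c| * (δ / 2) := by positivity
  rcases abs_cases c with ⟨hca, -⟩ | ⟨hca, -⟩ <;> rw [hca] at hright hleft hpos <;> linarith

lemma HasDerivAt.eq_inner_of_mem_superdiff {φ : E n → ℝ} {ξ : ℝ → E n} {p v : E n} {d t : ℝ}
    (hξ : HasDerivAt ξ v t) (hφξ : HasDerivAt (fun s => φ (ξ s)) d t)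
    (hp : p ∈ superdiff φ (ξ t)) : d = ⟪p, v⟫ := by
  -- `s ↦ φ (ξ s) - ⟪p, ξ s⟫` has derivative `d - ⟪p, v⟫` at `t` and, by the superdifferential
  -- inequality, grows at most like `o(|s - t|)` on both sides of `t`
  have hr : HasDerivAt (fun s => φ (ξ s) - ⟪p, ξ s⟫) (d - ⟪p, v⟫) t :=
    hφξ.sub (by simpa [Function.comp_def] using (innerSL ℝ p).hasFDerivAt.comp_hasDerivAt t hξ)
  obtain ⟨C, hC0, hC⟩ := hξ.isBigO_sub.exists_pos
  rw [← sub_eq_zero]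
  refine eq_zero_of_forall_eventually_mul_sub_le (t := t) fun ε hε => ?_
  filter_upwards [hξ.continuousAt.eventually (hp (ε / (2 * C)) (by positivity)), hC.bound,
    hr.isLittleO.def (half_pos hε)] with s hsup hbig hlin
  simp only [Real.norm_eq_abs] at hbig hlin
  rw [inner_sub_right] at hsup
  have : ε / (2 * C) * ‖ξ s - ξ t‖ ≤ ε / 2 * |s - t| := by
    calc ε / (2 * C) * ‖ξ s - ξ t‖ ≤ ε / (2 * C) * (C * |s - t|) := by gcongr
      _ = ε / 2 * |s - t| := by field_simp
  rw [smul_eq_mul] at hlin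
  linarith [neg_le_abs (φ (ξ s) - ⟪p, ξ s⟫ - (φ (ξ t) - ⟪p, ξ t⟫) - (s - t) * (d - ⟪p, v⟫))]

end Superdiff

lemma hasDerivAt_add_smul {F : Type*} [NormedAddCommGroup F] [NormedSpace ℝ F] (p u : F) (s : ℝ) :
    HasDerivAt (fun s : ℝ => p + s • u) u s := by
  simpa using ((hasDerivAt_id s).smul_const u).const_add p

namespace IsTonelli

variable {H : E n → E n → ℝ}

lemma contDiff_apply (hH : IsTonelli H) (x : E n) : ContDiff ℝ 2 (H x) :=
  hH.smooth.comp (contDiff_const.prodMk contDiff_id)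

lemma continuous_Hp (hH : IsTonelli H) : Continuous fun q : E n × E n => Hp H q.1 q.2 := by
  have h : ContDiff ℝ 1 fun q : E n × E n => fderiv ℝ (H q.1) q.2 :=
    ContDiff.fderiv (f := fun (q : E n × E n) (p : E n) => H q.1 p)
      (hH.smooth.comp (contDiff_fst.fst.prodMk contDiff_snd)) contDiff_snd (by norm_num)
  exact (InnerProductSpace.toDual ℝ (E n)).symm.continuous.comp h.continuous

lemma hasDerivAt_apply_add_smul (hH : IsTonelli H) (x p u : E n) (s : ℝ) :
    HasDerivAt (fun s : ℝ => H x (p + s • u)) (fderiv ℝ (H x) (p + s • u) u) s :=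
  ((hH.contDiff_apply x).differentiable two_ne_zero).differentiableAt.hasFDerivAt.comp_hasDerivAt
    s (hasDerivAt_add_smul p u s)

lemma convexOn_apply_add_smul (hH : IsTonelli H) (x p u : E n) :
    ConvexOn ℝ univ fun s : ℝ => H x (p + s • u) := by
  have hd2 : Differentiable ℝ (fderiv ℝ (H x)) :=
    ((hH.contDiff_apply x).fderiv_right (m := 1) (by norm_num)).differentiable one_ne_zero
  refine convexOn_of_hasDerivWithinAt2_nonneg convex_univ
    ((hH.contDiff_apply x).continuous.comp (by fun_prop)).continuousOn
    (f' := fun s => fderiv ℝ (H x) (p + s • u) u)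
    (f'' := fun s => fderiv ℝ (fderiv ℝ (H x)) (p + s • u) u u)
    (fun s _ => (hH.hasDerivAt_apply_add_smul x p u s).hasDerivWithinAt)
    (fun s _ => ?_) (fun s _ => ?_)
  · simpa using ((hd2 _).hasFDerivAt.comp_hasDerivAt s (hasDerivAt_add_smul p u s)).clm_apply
      (hasDerivAt_const s u)
  · rcases eq_or_ne u 0 with rfl | hu
    · simp
    · have := hH.posdef x (p + s • u) u hu
      rw [iteratedFDeriv_two_apply] at this
      simpa using this.le

lemma add_inner_Hp_sub_le (hH : IsTonelli H) (x p q : E n) :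
    H x p + ⟪Hp H x p, q - p⟫ ≤ H x q := by
  have := (hH.convexOn_apply_add_smul x p (q - p)).le_slope_of_hasDerivAt (mem_univ 0) (mem_univ 1)
    zero_lt_one (hH.hasDerivAt_apply_add_smul x p (q - p) 0)
  rw [slope_def_field] at this
  simp only [zero_smul, add_zero, one_smul, add_sub_cancel, sub_zero, div_one] at this
  rw [Hp, gradient, InnerProductSpace.toDual_symm_apply]
  linarith

lemma bddAbove_range_inner_sub (hH : IsTonelli H) (x v : E n) :
    BddAbove (range fun p : E n => ⟪p, v⟫ - H x p) := by
  obtain ⟨B, hB⟩ := hH.superlinear ‖v‖ (norm_nonneg v)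
  refine ⟨B, forall_mem_range.2 fun p => ?_⟩
  linarith [hB x p, real_inner_le_norm p v, mul_comm ‖p‖ ‖v‖]

lemma Lag_Hp (hH : IsTonelli H) (x p : E n) :
    Lag H x (Hp H x p) = ⟪p, Hp H x p⟫ - H x p := by
  refine le_antisymm (ciSup_le fun q => ?_) (le_ciSup (hH.bddAbove_range_inner_sub x _) p)
  have := hH.add_inner_Hp_sub_le x p q
  rw [inner_sub_right, real_inner_comm p, real_inner_comm q] at this
  linarith

lemma neg_le_Lag (hH : IsTonelli H) (x v : E n) : -H x 0 ≤ Lag H x v := by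
  simpa [Lag] using le_ciSup (hH.bddAbove_range_inner_sub x v) 0

lemma continuous_Lag_Hp (hH : IsTonelli H) :
    Continuous fun q : E n × E n => Lag H q.1 (Hp H q.1 q.2) := by
  simp_rw [hH.Lag_Hp]
  exact (continuous_snd.inner hH.continuous_Hp).sub hH.smooth.continuous

end IsTonelli

lemma fundSol_le_integral {L : E n → E n → ℝ} {m t : ℝ} (hL : ∀ x v, m ≤ L x v) (ht : 0 ≤ t)
    {ξ ξ' : ℝ → E n} (hξ' : IntervalIntegrable ξ' volume 0 t)
    (hξ : ∀ s ∈ Icc 0 t, ξ s = ξ 0 + ∫ u in (0:ℝ)..s, ξ' u) :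
    fundSol L t (ξ 0) (ξ t) ≤ ∫ s in (0:ℝ)..t, L (ξ s) (ξ' s) := by
  refine csInf_le ⟨min (m * t) 0, ?_⟩ ⟨ξ, ξ', rfl, rfl, hξ', hξ, rfl⟩
  rintro r ⟨ζ, ζ', -, -, -, -, rfl⟩
  -- a non-integrable action has the junk value `0`
  by_cases hint : IntervalIntegrable (fun s => L (ζ s) (ζ' s)) volume 0 t
  · refine min_le_of_left_le ?_
    simpa [ht, mul_comm] using intervalIntegral.integral_mono_on ht intervalIntegrable_const hint
      fun s _ => hL (ζ s) (ζ' s)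
  · rw [intervalIntegral.integral_undef hint]
    exact min_le_right _ _

section Periodic

variable {F : Type*} [SeminormedAddCommGroup F]

def intFract (x : E n) : E n := x - intVec fun i => ⌊x i⌋

lemma norm_intFract_le (x : E n) : ‖intFract x‖ ≤ √n := by
  rw [EuclideanSpace.norm_eq]
  refine Real.sqrt_le_sqrt ?_
  calc ∑ i, ‖intFract x i‖ ^ 2 ≤ ∑ _i : Fin n, (1 : ℝ) := by
        refine Finset.sum_le_sum fun i _ => ?_
        have hi : intFract x i = Int.fract (x i) := by simp [intFract, intVec, ← Int.self_sub_floor]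
        rw [hi, Real.norm_of_nonneg (Int.fract_nonneg _)]
        nlinarith [Int.fract_nonneg (x i), Int.fract_lt_one (x i)]
    _ = n := by simp

lemma ZPeriodic.apply_intFract {α : Type*} {f : E n → α} (hf : ZPeriodic f) (x : E n) :
    f (intFract x) = f x := by
  simpa [intFract] using (hf (intFract x) fun i => ⌊x i⌋).symm

lemma exists_forall_norm_le_of_zPeriodic {X : Type*} [TopologicalSpace X] {f : E n × X → F}
    (hf : Continuous f) (hper : ∀ y, ZPeriodic fun x => f (x, y)) {K : Set X} (hK : IsCompact K) :
    ∃ M, ∀ x, ∀ y ∈ K, ‖f (x, y)‖ ≤ M := by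
  obtain ⟨M, hM⟩ := ((isCompact_closedBall (0 : E n) √n).prod hK).exists_bound_of_continuousOn
    hf.continuousOn
  refine ⟨M, fun x y hy => ?_⟩
  rw [← (hper y).apply_intFract x]
  exact hM _ ⟨by simpa using norm_intFract_le x, hy⟩

lemma exists_forall_norm_comp_le_of_zPeriodic {f : E n × E n → ℝ} (hf : Continuous f)
    (hper : ∀ p, ZPeriodic fun x => f (x, p)) {ps : E n → E n} {κ : ℝ} (hps : ∀ x, ‖ps x‖ ≤ κ) :
    ∃ M, ∀ x, ‖f (x, ps x)‖ ≤ M := by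
  obtain ⟨M, hM⟩ := exists_forall_norm_le_of_zPeriodic hf hper (isCompact_closedBall 0 κ)
  exact ⟨M, fun x => hM x (ps x) (by simpa using hps x)⟩

lemma ZPeriodic.exists_forall_norm_le {f : E n → F} (hf : Continuous f) (hper : ZPeriodic f) :
    ∃ M, ∀ x, ‖f x‖ ≤ M := by
  obtain ⟨M, hM⟩ := exists_forall_norm_le_of_zPeriodic (f := fun q : E n × Unit => f q.1)
    (hf.comp continuous_fst) (fun _ => hper) isCompact_univ
  exact ⟨M, fun x => hM x () (mem_univ _)⟩

lemma zPeriodic_Hp {H : E n → E n → ℝ} (hper : ∀ p, ZPeriodic fun x => H x p) (p : E n) :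
    ZPeriodic fun x => Hp H x p := by
  intro x k
  have : H (x + intVec k) = H x := funext fun q => hper q x k
  simp only [Hp, this]

lemma zPeriodic_inner_Hp {H : E n → E n → ℝ} (hper : ∀ p, ZPeriodic fun x => H x p) (p : E n) :
    ZPeriodic fun x => ⟪p, Hp H x p⟫ := fun x k =>
  congrArg (⟪p, ·⟫) (zPeriodic_Hp hper p x k)

lemma zPeriodic_Lag_Hp {H : E n → E n → ℝ} (hper : ∀ p, ZPeriodic fun x => H x p) (p : E n) :
    ZPeriodic fun x => Lag H x (Hp H x p) := by
  intro x k
  have : H (x + intVec k) = H x := funext fun q => hper q x k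
  simp only [Lag, Hp, this]

lemma IsTonelli.exists_le_Lag {H : E n → E n → ℝ} (hH : IsTonelli H)
    (hper : ∀ p, ZPeriodic fun x => H x p) : ∃ m, ∀ x v, m ≤ Lag H x v := by
  obtain ⟨M, hM⟩ := (hper 0).exists_forall_norm_le
    (hH.smooth.continuous.comp (continuous_id.prodMk continuous_const))
  exact ⟨-M, fun x v => (neg_le_neg ((le_abs_self _).trans (hM x))).trans (hH.neg_le_Lag x v)⟩

end Periodic

section PathSpace

instance pathSpaceBorel : BorelSpace C(ℝ≥0, E n) := ⟨rfl⟩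

lemma continuous_ext (γ : C(ℝ≥0, E n)) : Continuous (ext γ) :=
  (map_continuous γ).comp continuous_real_toNNReal

@[simp] lemma ext_zero (γ : C(ℝ≥0, E n)) : ext γ 0 = γ 0 := by
  simp [_root_.ext]

@[simp] lemma ext_one (γ : C(ℝ≥0, E n)) : ext γ 1 = γ 1 := by
  simp [_root_.ext]

lemma measurable_eval (t : ℝ≥0) : Measurable fun γ : C(ℝ≥0, E n) => γ t :=
  (continuous_eval_const t).measurable

lemma measurable_uncurry_ext : Measurable fun q : C(ℝ≥0, E n) × ℝ => ext q.1 q.2 :=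
  (measurable_uncurry_of_continuous_of_measurable (fun γ => continuous_ext γ)
    (fun t => measurable_eval (Real.toNNReal t))).comp measurable_swap

lemma measurable_shiftMap (t : ℝ≥0) : Measurable (shiftMap (n := n) t) :=
  (ContinuousMap.continuous_precomp _).measurable

variable {μ : Measure C(ℝ≥0, E n)} {f : E n → ℝ}

lemma map_eval_eq_map_eval_zero (hinv : ∀ t, μ.map (shiftMap t) = μ) (t : ℝ≥0) :
    μ.map (fun γ => γ t) = μ.map (fun γ => γ 0) := by
  conv_rhs => rw [← hinv t]
  rw [Measure.map_map (measurable_eval 0) (measurable_shiftMap t)]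
  congr 1
  funext γ
  simp [shiftMap]

lemma integral_comp_eval_eq (hinv : ∀ t, μ.map (shiftMap t) = μ) (hf : Measurable f)
    (t : ℝ≥0) : ∫ γ, f (γ t) ∂μ = ∫ γ, f (γ 0) ∂μ := by
  rw [← integral_map (measurable_eval t).aemeasurable hf.aestronglyMeasurable,
    map_eval_eq_map_eval_zero hinv t,
    integral_map (measurable_eval 0).aemeasurable hf.aestronglyMeasurable]

variable [IsFiniteMeasure μ] {M : ℝ}

lemma integrable_comp_eval (hf : Measurable f) (hM : ∀ x, ‖f x‖ ≤ M) (t : ℝ≥0) :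
    Integrable (fun γ => f (γ t)) μ :=
  .of_bound (hf.comp (measurable_eval t)).aestronglyMeasurable M (.of_forall fun γ => hM (γ t))

lemma integrable_comp_uncurry_ext (hf : Measurable f) (hM : ∀ x, ‖f x‖ ≤ M) {a b : ℝ} :
    Integrable (fun q : C(ℝ≥0, E n) × ℝ => f (ext q.1 q.2)) (μ.prod (volume.restrict (Ioc a b))) :=
  .of_bound (hf.comp measurable_uncurry_ext).aestronglyMeasurable M
    (.of_forall fun q => hM (ext q.1 q.2))

lemma integrable_intervalIntegral_comp_ext (hf : Measurable f) (hM : ∀ x, ‖f x‖ ≤ M) {a b : ℝ}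
    (hab : a ≤ b) : Integrable (fun γ => ∫ t in a..b, f (ext γ t)) μ := by
  simp_rw [intervalIntegral.integral_of_le hab]
  exact (integrable_comp_uncurry_ext hf hM).integral_prod_left

lemma integral_intervalIntegral_comp_ext (hinv : ∀ t, μ.map (shiftMap t) = μ) (hf : Measurable f)
    (hM : ∀ x, ‖f x‖ ≤ M) {a b : ℝ} (hab : a ≤ b) :
    ∫ γ, (∫ t in a..b, f (ext γ t)) ∂μ = (b - a) * ∫ γ, f (γ 0) ∂μ := by
  simp_rw [intervalIntegral.integral_of_le hab]
  rw [integral_integral_swap (integrable_comp_uncurry_ext hf hM)]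
  simp_rw [_root_.ext, integral_comp_eval_eq hinv hf]
  simp [hab]

end PathSpace

namespace IsSSC

variable {H : E n → E n → ℝ} {ps : E n → E n} {γ : C(ℝ≥0, E n)} {b : ℝ}

lemma ae_hasDerivAt (hγ : IsSSC H ps γ) :
    ∀ᵐ t, 0 ≤ t → HasDerivAt (ext γ) (Hp H (ext γ t) (ps (ext γ t))) t := by
  filter_upwards [(ae_restrict_iff' measurableSet_Ici).1 hγ.2, measure_singleton (μ := volume) 0
    |> measure_eq_zero_iff_ae_notMem.1] with t ht ht0 htpos
  exact (ht htpos).hasDerivAt (Ici_mem_nhds (lt_of_le_of_ne htpos (Ne.symm ht0)))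

lemma exists_lipschitzOnWith (hγ : IsSSC H ps γ) (hb : 0 ≤ b) :
    ∃ K, LipschitzOnWith K (ext γ) (uIcc 0 b) := by
  obtain ⟨K, hK⟩ := hγ.1
  exact ⟨K, hK.mono fun t ht => by rw [uIcc_of_le hb] at ht; exact ht.1⟩

lemma measurable_velocity (hH : IsTonelli H) (hps : Measurable ps) (γ : C(ℝ≥0, E n)) :
    Measurable fun t => Hp H (ext γ t) (ps (ext γ t)) :=
  hH.continuous_Hp.measurable.comp
    ((continuous_ext γ).measurable.prodMk (hps.comp (continuous_ext γ).measurable))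

lemma intervalIntegrable_velocity (hH : IsTonelli H) (hps : Measurable ps) (hγ : IsSSC H ps γ)
    (hb : 0 ≤ b) : IntervalIntegrable (fun t => Hp H (ext γ t) (ps (ext γ t))) volume 0 b := by
  obtain ⟨K, hK⟩ := hγ.exists_lipschitzOnWith hb
  refine hK.intervalIntegrable_of_ae_hasDerivAt
    (measurable_velocity hH hps γ).aestronglyMeasurable ?_
  filter_upwards [hγ.ae_hasDerivAt] with t ht htb
  exact ht (by rw [uIcc_of_le hb] at htb; exact htb.1)

lemma eq_add_integral (hH : IsTonelli H) (hps : Measurable ps) (hγ : IsSSC H ps γ) (hb : 0 ≤ b) :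
    ext γ b = ext γ 0 + ∫ t in (0:ℝ)..b, Hp H (ext γ t) (ps (ext γ t)) := by
  obtain ⟨K, hK⟩ := hγ.exists_lipschitzOnWith hb
  rw [hK.integral_eq_sub_of_ae_hasDerivAt (measurable_velocity hH hps γ).aestronglyMeasurable ?_,
    add_sub_cancel]
  filter_upwards [hγ.ae_hasDerivAt] with t ht htb
  exact ht (by rw [uIcc_of_le hb] at htb; exact htb.1)

lemma sub_eq_integral_inner (hH : IsTonelli H) (hps : Measurable ps) {φ : E n → ℝ} {κ : ℝ≥0}
    (hφ : LipschitzWith κ φ) (hsd : ∀ x, ps x ∈ superdiff φ x) (hγ : IsSSC H ps γ) (hb : 0 ≤ b) :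
    φ (ext γ b) - φ (ext γ 0) =
      ∫ t in (0:ℝ)..b, ⟪ps (ext γ t), Hp H (ext γ t) (ps (ext γ t))⟫ := by
  obtain ⟨K, hK⟩ := hγ.exists_lipschitzOnWith hb
  have hφγ : LipschitzOnWith (κ * K) (fun t => φ (ext γ t)) (uIcc 0 b) := hφ.comp_lipschitzOnWith hK
  refine (hφγ.integral_eq_sub_of_ae_hasDerivAt ?_ ?_).symm
  · exact (continuous_inner.measurable.comp ((hps.comp (continuous_ext γ).measurable).prodMk
      (measurable_velocity hH hps γ))).aestronglyMeasurable
  · filter_upwards [hγ.ae_hasDerivAt, hφγ.absolutelyContinuousOnInterval.ae_differentiableAt]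
      with t hγt hφt htb
    have hγt := hγt (by rw [uIcc_of_le hb] at htb; exact htb.1)
    have hφt := (hφt htb).hasDerivAt
    rwa [← hγt.eq_inner_of_mem_superdiff hφt (hsd _)]

lemma fundSol_le_integral_Lag (hH : IsTonelli H) (hper : ∀ p, ZPeriodic fun x => H x p)
    (hps : Measurable ps) (hγ : IsSSC H ps γ) (hb : 0 ≤ b) :
    fundSol (Lag H) b (ext γ 0) (ext γ b) ≤
      ∫ t in (0:ℝ)..b, Lag H (ext γ t) (Hp H (ext γ t) (ps (ext γ t))) := by
  obtain ⟨m, hm⟩ := hH.exists_le_Lag hper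
  exact fundSol_le_integral hm hb (hγ.intervalIntegrable_velocity hH hps hb)
    fun s hs => hγ.eq_add_integral hH hps hs.1

end IsSSC

section Energy

variable {H : E n → E n → ℝ} {φ : E n → ℝ} {ps : E n → E n} {κ : ℝ≥0}
  {μ : Measure C(ℝ≥0, E n)}

section Finite

variable [IsFiniteMeasure μ]

lemma integral_inner_Hp_eq_zero (hH : IsTonelli H) (hper : ∀ p, ZPeriodic fun x => H x p)
    (hφ : LipschitzWith κ φ) (hφper : ZPeriodic φ) (hsd : ∀ x, ps x ∈ superdiff φ x)
    (hps : Measurable ps) (hae : ∀ᵐ γ ∂μ, IsSSC H ps γ) (hinv : ∀ t, μ.map (shiftMap t) = μ) :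
    ∫ γ, ⟪ps (γ 0), Hp H (γ 0) (ps (γ 0))⟫ ∂μ = 0 := by
  obtain ⟨Me, hMe⟩ := exists_forall_norm_comp_le_of_zPeriodic
    (continuous_snd.inner hH.continuous_Hp) (zPeriodic_inner_Hp hper)
    fun x => norm_le_of_mem_superdiff hφ (hsd x)
  obtain ⟨Mφ, hMφ⟩ := hφper.exists_forall_norm_le hφ.continuous
  have hem : Measurable fun x => ⟪ps x, Hp H x (ps x)⟫ :=
    (continuous_snd.inner hH.continuous_Hp).measurable.comp (measurable_id.prodMk hps)
  have hφm : Measurable φ := hφ.continuous.measurable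
  calc ∫ γ, ⟪ps (γ 0), Hp H (γ 0) (ps (γ 0))⟫ ∂μ
      = ∫ γ, (∫ t in (0:ℝ)..1, ⟪ps (ext γ t), Hp H (ext γ t) (ps (ext γ t))⟫) ∂μ := by
        rw [integral_intervalIntegral_comp_ext hinv hem hMe zero_le_one, sub_zero, one_mul]
    _ = ∫ γ, (φ (γ 1) - φ (γ 0)) ∂μ := by
        refine integral_congr_ae (hae.mono fun γ hγ => ?_)
        simpa using (hγ.sub_eq_integral_inner hH hps hφ hsd zero_le_one).symm
    _ = 0 := by
        rw [integral_sub (integrable_comp_eval hφm hMφ 1) (integrable_comp_eval hφm hMφ 0),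
          integral_comp_eval_eq hinv hφm 1, sub_self]

lemma integrable_comp_eval_of_zPeriodic {f : E n × E n → ℝ} (hf : Continuous f)
    (hper : ∀ p, ZPeriodic fun x => f (x, p)) (hps : Measurable ps) (hpsκ : ∀ x, ‖ps x‖ ≤ κ)
    (t : ℝ≥0) : Integrable (fun γ => f (γ t, ps (γ t))) μ := by
  obtain ⟨M, hM⟩ := exists_forall_norm_comp_le_of_zPeriodic hf hper hpsκ
  exact integrable_comp_eval (f := fun x => f (x, ps x))
    (hf.measurable.comp (measurable_id.prodMk hps)) hM t

lemma integral_Lag_Hp_eq_neg_integral (hH : IsTonelli H) (hper : ∀ p, ZPeriodic fun x => H x p)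
    (hφ : LipschitzWith κ φ) (hφper : ZPeriodic φ) (hsd : ∀ x, ps x ∈ superdiff φ x)
    (hps : Measurable ps) (hae : ∀ᵐ γ ∂μ, IsSSC H ps γ) (hinv : ∀ t, μ.map (shiftMap t) = μ) :
    ∫ γ, Lag H (γ 0) (Hp H (γ 0) (ps (γ 0))) ∂μ = -∫ γ, H (γ 0) (ps (γ 0)) ∂μ := by
  have hpsκ x := norm_le_of_mem_superdiff hφ (hsd x)
  simp_rw [hH.Lag_Hp]
  rw [integral_sub (integrable_comp_eval_of_zPeriodic (continuous_snd.inner hH.continuous_Hp)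
      (zPeriodic_inner_Hp hper) hps hpsκ 0)
      (integrable_comp_eval_of_zPeriodic hH.smooth.continuous hper hps hpsκ 0),
    integral_inner_Hp_eq_zero hH hper hφ hφper hsd hps hae hinv, zero_sub]

end Finite

lemma integral_H_le_of_forall_sub_le_fundSol [IsProbabilityMeasure μ] (hH : IsTonelli H)
    (hper : ∀ p, ZPeriodic fun x => H x p) (hφ : LipschitzWith κ φ) (hφper : ZPeriodic φ)
    (hsd : ∀ x, ps x ∈ superdiff φ x) (hps : Measurable ps) (hae : ∀ᵐ γ ∂μ, IsSSC H ps γ)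
    (hinv : ∀ t, μ.map (shiftMap t) = μ) {c : ℝ} {ψ : E n → ℝ} (hψ : Continuous ψ)
    (hψper : ZPeriodic ψ)
    (hdom : ∀ x y t, 0 < t → ψ y - ψ x ≤ fundSol (Lag H) t x y + c * t) :
    ∫ γ, H (γ 0) (ps (γ 0)) ∂μ ≤ c := by
  obtain ⟨Mℓ, hMℓ⟩ : ∃ M, ∀ x, ‖Lag H x (Hp H x (ps x))‖ ≤ M :=
    exists_forall_norm_comp_le_of_zPeriodic hH.continuous_Lag_Hp
    (zPeriodic_Lag_Hp hper) fun x => norm_le_of_mem_superdiff hφ (hsd x)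
  have hℓm : Measurable fun x => Lag H x (Hp H x (ps x)) :=
    (hH.continuous_Lag_Hp.measurable.comp (measurable_id.prodMk hps) :)
  have hℓi := integrable_intervalIntegral_comp_ext (μ := μ) hℓm hMℓ zero_le_one
  obtain ⟨Mψ, hMψ⟩ := hψper.exists_forall_norm_le hψ
  have hψi t := integrable_comp_eval (μ := μ) hψ.measurable hMψ t
  have hpath : ∀ᵐ γ ∂μ, ψ (γ 1) - ψ (γ 0) ≤
      (∫ t in (0:ℝ)..1, Lag H (ext γ t) (Hp H (ext γ t) (ps (ext γ t)))) + c := by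
    filter_upwards [hae] with γ hγ
    have := hγ.fundSol_le_integral_Lag hH hper hps zero_le_one
    rw [ext_zero, ext_one] at this
    linarith [hdom (γ 0) (γ 1) 1 one_pos]
  have h : ∫ γ, (ψ (γ 1) - ψ (γ 0)) ∂μ ≤
      ∫ γ, ((∫ t in (0:ℝ)..1, Lag H (ext γ t) (Hp H (ext γ t) (ps (ext γ t)))) + c) ∂μ :=
    integral_mono_ae ((hψi 1).sub (hψi 0)) (hℓi.add (integrable_const c)) hpath
  rw [integral_sub (hψi 1) (hψi 0), integral_comp_eval_eq hinv hψ.measurable 1, sub_self,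
    integral_add hℓi (integrable_const c),
    integral_intervalIntegral_comp_ext hinv hℓm hMℓ zero_le_one,
    integral_Lag_Hp_eq_neg_integral hH hper hφ hφper hsd hps hae hinv, MeasureTheory.integral_const,
    probReal_univ, one_smul] at h
  linarith

end Energy

theorem stmt19_general (H : E n → E n → ℝ) (hH : IsTonelli H)
    (hper : ∀ p : E n, ZPeriodic (fun x => H x p)) (φ : E n → ℝ)
    (hφper : ZPeriodic φ) (hφLip : ∃ κ : ℝ≥0, LipschitzWith κ φ)
    (ps : E n → E n) (hps : MinSel φ H ps) (hpsmeas : Measurable ps)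
    (μ : MeasureTheory.Measure C(ℝ≥0, E n))
    [MeasureTheory.IsProbabilityMeasure μ]
    (hconc : μ {γ : C(ℝ≥0, E n) | ¬ IsSSC H ps γ} = 0)
    (hinv : ∀ t : ℝ≥0, μ.map (shiftMap t) = μ) :
    (∫ γ : C(ℝ≥0, E n), H (γ 0) (ps (γ 0)) ∂μ =
      -∫ γ : C(ℝ≥0, E n), Lag H (γ 0) (Hp H (γ 0) (ps (γ 0))) ∂μ) ∧
    ∀ (c : ℝ) (ψ : E n → ℝ), ZPeriodic ψ → (∃ κ : ℝ≥0, LipschitzWith κ ψ) →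
      (∀ (x y : E n) (t : ℝ), 0 < t → ψ y - ψ x ≤ fundSol (Lag H) t x y + c * t) →
      (∫ γ : C(ℝ≥0, E n), H (γ 0) (ps (γ 0)) ∂μ) ≤ c := by
  obtain ⟨κ, hφ⟩ := hφLip
  have hsd x : ps x ∈ superdiff φ x := (hps x).1
  have hae : ∀ᵐ γ ∂μ, IsSSC H ps γ := ae_iff.2 hconc
  refine ⟨?_, fun c ψ hψper ⟨κψ, hψ⟩ hdom => ?_⟩
  · rw [integral_Lag_Hp_eq_neg_integral hH hper hφ hφper hsd hpsmeas hae hinv, neg_neg]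
  · exact integral_H_le_of_forall_sub_le_fundSol hH hper hφ hφper hsd hpsmeas hae hinv
      hψ.continuous hψper hdom

/-- Energy identity for invariant measures of the GHGF semi-flow, and the bound by
any critical value `c` admitting a dominated subsolution `ψ`. -/
theorem stmt19 (H : E n → E n → ℝ) (hH : IsTonelli H)
    (hper : ∀ p : E n, ZPeriodic (fun x => H x p)) (φ : E n → ℝ)
    (hφper : ZPeriodic φ) (hφLip : ∃ κ : ℝ≥0, LipschitzWith κ φ)
    (hφsc : ∃ C₀ : ℝ, 0 ≤ C₀ ∧ Semiconcave C₀ φ)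
    (ps : E n → E n) (hps : MinSel φ H ps) (hpsmeas : Measurable ps)
    (μ : MeasureTheory.Measure C(ℝ≥0, E n))
    [MeasureTheory.IsProbabilityMeasure μ]
    (hconc : μ {γ : C(ℝ≥0, E n) | ¬ IsSSC H ps γ} = 0)
    (hinv : ∀ t : ℝ≥0, μ.map (shiftMap t) = μ) :
    (∫ γ : C(ℝ≥0, E n), H (γ 0) (ps (γ 0)) ∂μ =
      -∫ γ : C(ℝ≥0, E n), Lag H (γ 0) (Hp H (γ 0) (ps (γ 0))) ∂μ) ∧
    ∀ (c : ℝ) (ψ : E n → ℝ), ZPeriodic ψ → (∃ κ : ℝ≥0, LipschitzWith κ ψ) →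
      (∀ (x y : E n) (t : ℝ), 0 < t → ψ y - ψ x ≤ fundSol (Lag H) t x y + c * t) →
      (∫ γ : C(ℝ≥0, E n), H (γ 0) (ps (γ 0)) ∂μ) ≤ c :=
  stmt19_general H hH hper φ hφper hφLip ps hps hpsmeas μ hconc hinv

end
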